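/- arXiv:2310.14219 — 2 statements merged into one kernel-verified Lean document; each statement's English description precedes it below -/
import Mathlib

section
/- Let q be a prime power and n an integer with q^2 + q + 1 < n and 2n(2q − 1) ≤ q^4. Then A_q(n, 3) > K_q(n, 3); equivalently, for every F_q-linear code D ⊆ F_q^n with minimum Hamming distance at least 3 there exists a (not necessarily linear) code C ⊆ {0, 1, …, q−1}^n with minimum Hamming distance at least 3 and |C| > |D|. In particular r_q(n, 3) < r_q^L(n, 3). -/
/-!
A linear code `D ⊆ F_qⁿ` of minimum distance `3` has `n(q - 1) + 1` distinct cosets with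
representatives of weight at most `1`, so its redundancy `r` satisfies `q ^ r > n(q - 1) ≥ q ^ 3`
once `n > q² + q + 1`; hence `|D| ≤ q ^ (n - 4)`.
Conversely, with `p` a prime in `[n, 2n - 2]`, the syndrome `x ↦ (∑ xᵢ mod 2q - 1, ∑ i xᵢ mod p)`
separates any two words at distance `1` or `2`: the first coordinate forces the two differences to
cancel, the second then forces their positions to coincide. Since the syndrome takes fewer than
`q ^ 4` values, one of its fibres is a code of minimum distance `3` with more than `q ^ (n - 4)`
words.
-/

open Finset Module

section Hamming

variable {ι β : Type*} [Fintype ι]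

lemma hammingNorm_single_le_one [DecidableEq ι] [Zero β] [DecidableEq β] (i : ι) (a : β) :
    hammingNorm (Pi.single i a : ι → β) ≤ 1 := by
  refine (card_le_card fun j hj => ?_).trans (card_singleton i).le
  by_contra hji
  simp_all [Pi.single_eq_of_ne (Finset.notMem_singleton.mp hji)]

lemma hammingDist_le_hammingNorm_add [Zero β] [DecidableEq β] (x y : ι → β) :
    hammingDist x y ≤ hammingNorm x + hammingNorm y := by
  simpa [hammingDist_zero_right, hammingDist_zero_left] using hammingDist_triangle x 0 y

end Hamming

-- `(q² + q + 1)(q - 1) = q³ - 1`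
lemma pow_three_lt_mul_pred_add_one {q n : ℕ} (hq : 1 < q) (hn : q ^ 2 + q + 1 < n) :
    q ^ 3 < n * (q - 1) + 1 := by
  obtain ⟨r, rfl⟩ : ∃ r, q = r + 1 := ⟨q - 1, by omega⟩
  simp only [Nat.add_sub_cancel]
  nlinarith

namespace Submodule

variable {ι : Type*} [Fintype ι]

lemma eq_of_sub_mem_of_hammingDist_le_two {R : Type*} [Ring R] [DecidableEq R]
    {D : Submodule R (ι → R)} (hD : ∀ x ∈ D, ∀ y ∈ D, x ≠ y → 3 ≤ hammingDist x y)
    {x y : ι → R} (hxy : x - y ∈ D) (h : hammingDist x y ≤ 2) : x = y := by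
  by_contra hne
  have := hD _ hxy 0 D.zero_mem (sub_ne_zero.mpr hne)
  have hdist : hammingDist (x - y) 0 = hammingDist x y := by simp [hammingDist, sub_eq_zero]
  omega

variable {F : Type*} [Field F] [Fintype F]

/-- The Hamming bound for linear codes of minimum distance `3`. -/
lemma card_mul_pred_add_one_le_natCard_quotient [DecidableEq F] [DecidableEq ι]
    {D : Submodule F (ι → F)}
    (hD : ∀ x ∈ D, ∀ y ∈ D, x ≠ y → 3 ≤ hammingDist x y) :
    Fintype.card ι * (Fintype.card F - 1) + 1 ≤ Nat.card ((ι → F) ⧸ D) := by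
  let v : Option (ι × {a : F // a ≠ 0}) → ι → F :=
    fun o => o.elim 0 fun ia => Pi.single ia.1 ia.2
  have hv : v.Injective := by
    rintro (_ | ⟨i, a, ha⟩) (_ | ⟨j, b, hb⟩) hij
    · rfl
    · exact absurd (congrFun hij j).symm (by simpa [v] using hb)
    · exact absurd (congrFun hij i) (by simpa [v] using ha)
    · obtain rfl : i = j := by
        by_contra hne
        simpa [v, Pi.single_eq_of_ne hne, ha] using congrFun hij i
      simpa [v] using congrFun hij i
  have hv_norm (o) : hammingNorm (v o) ≤ 1 := by
    rcases o with _ | ⟨i, a⟩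
    · simp [v]
    · exact hammingNorm_single_le_one i a.1
  have hmk : (D.mkQ ∘ v).Injective := fun o o' h =>
    hv <| eq_of_sub_mem_of_hammingDist_le_two hD ((Quotient.eq D).mp h) <|
      (hammingDist_le_hammingNorm_add _ _).trans <| by linarith [hv_norm o, hv_norm o']
  simpa [Fintype.card_subtype_compl] using Nat.card_le_card_of_injective _ hmk

lemma natCard_le_pow_card_sub (D : Submodule F (ι → F)) {r : ℕ}
    (hr : r ≤ finrank F ((ι → F) ⧸ D)) :
    Nat.card D ≤ Fintype.card F ^ (Fintype.card ι - r) := by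
  have hrank := D.finrank_quotient_add_finrank
  rw [finrank_pi, Fintype.card_eq_nat_card] at hrank
  rw [natCard_eq_pow_finrank (K := F), Fintype.card_eq_nat_card, Fintype.card_eq_nat_card]
  exact Nat.pow_le_pow_right Nat.card_pos (by omega)

lemma four_le_finrank_quotient [DecidableEq F] [DecidableEq ι] {D : Submodule F (ι → F)}
    (hD : ∀ x ∈ D, ∀ y ∈ D, x ≠ y → 3 ≤ hammingDist x y)
    (hn : Fintype.card F ^ 2 + Fintype.card F + 1 < Fintype.card ι) :
    4 ≤ finrank F ((ι → F) ⧸ D) := by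
  have hbound := card_mul_pred_add_one_le_natCard_quotient hD
  rw [natCard_eq_pow_finrank (K := F), ← Fintype.card_eq_nat_card] at hbound
  exact (Nat.pow_lt_pow_iff_right Fintype.one_lt_card).mp
    ((pow_three_lt_mul_pred_add_one Fintype.one_lt_card hn).trans_le hbound)

end Submodule

lemma Finset.exists_subset_pair_of_card_le_two {α : Type*} [DecidableEq α] {s : Finset α}
    {i : α} (hi : i ∈ s) (hs : #s ≤ 2) : ∃ j, s ⊆ {i, j} := by
  have hcard : #(s.erase i) ≤ 1 := by rw [card_erase_of_mem hi]; omega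
  have : Nonempty α := ⟨i⟩
  obtain ⟨j, hj⟩ := card_le_one_iff_subset_singleton.mp hcard
  exact ⟨j, insert_erase hi ▸ insert_subset_insert i hj⟩

lemma mul_pow_sub_four_add_one_le_pow {a q n : ℕ} (ha : a < q ^ 4) (hn : 8 ≤ n) :
    a * (q ^ (n - 4) + 1) ≤ q ^ n := by
  have hq : 0 < q := Nat.pos_of_ne_zero (by rintro rfl; simp at ha)
  have hpow : q ^ 4 ≤ q ^ (n - 4) := Nat.pow_le_pow_right hq (by omega)
  calc a * (q ^ (n - 4) + 1) ≤ (a + 1) * q ^ (n - 4) := by nlinarith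
    _ ≤ q ^ 4 * q ^ (n - 4) := Nat.mul_le_mul_right _ ha
    _ = q ^ n := by rw [← pow_add]; congr 1; omega

section Syndrome

variable {n q : ℕ}

lemma eq_zero_of_dvd_sum_of_support_subset_pair {d : Fin n → ℤ} {b m p : ℕ}
    (hb : ∀ t, |d t| ≤ b) (hm : 2 * b < m) (hp : p.Prime) (hnp : n ≤ p) (hbp : b < p)
    {i j : Fin n} (hsupp : ∀ t, t ≠ i → t ≠ j → d t = 0)
    (hsum : (m : ℤ) ∣ ∑ t, d t) (hwsum : (p : ℤ) ∣ ∑ t : Fin n, ((t : ℕ) : ℤ) * d t) :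
    d = 0 := by
  suffices d i = 0 ∧ d j = 0 by
    funext t
    by_cases hti : t = i
    · exact hti ▸ this.1
    by_cases htj : t = j
    · exact htj ▸ this.2
    exact hsupp t hti htj
  rcases eq_or_ne i j with rfl | hij
  · rw [Fintype.sum_eq_single i fun t ht => hsupp t ht ht] at hsum
    have hdi := Int.eq_zero_of_abs_lt_dvd hsum <| by
      linarith [hb i, (Nat.cast_lt (α := ℤ)).mpr hm]
    exact ⟨hdi, hdi⟩
  rw [Fintype.sum_eq_add i j hij fun t ht => hsupp t ht.1 ht.2] at hsum
  rw [Fintype.sum_eq_add i j hij fun t ht => by simp [hsupp t ht.1 ht.2]] at hwsum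
  have hji : d j = -d i := by
    have := Int.eq_zero_of_abs_lt_dvd hsum <| by
      linarith [abs_add_le (d i) (d j), hb i, hb j, (Nat.cast_lt (α := ℤ)).mpr hm]
    linarith
  have hw :
      ((i : ℕ) : ℤ) * d i + ((j : ℕ) : ℤ) * d j = (((i : ℕ) : ℤ) - (j : ℕ)) * d i := by
    rw [hji]; ring
  rw [hw] at hwsum
  rcases (Nat.prime_iff_prime_int.mp hp).dvd_mul.mp hwsum with hp_ij | hp_di
  · have := Int.eq_zero_of_abs_lt_dvd hp_ij (by rw [abs_lt]; constructor <;> omega)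
    exact absurd (Fin.ext (by omega)) hij
  · have hdi := Int.eq_zero_of_abs_lt_dvd hp_di <| by
      linarith [hb i, (Nat.cast_lt (α := ℤ)).mpr hbp]
    exact ⟨hdi, by rw [hji, hdi, neg_zero]⟩

def syndrome (m p : ℕ) (x : Fin n → Fin q) : ZMod m × ZMod p :=
  (((∑ t, ((x t : ℕ) : ℤ) : ℤ) : ZMod m),
    ((∑ t : Fin n, ((t : ℕ) : ℤ) * (x t : ℕ) : ℤ) : ZMod p))

lemma three_le_hammingDist_of_syndrome_eq {m p : ℕ} (hm : 2 * q ≤ m + 1) (hp : p.Prime)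
    (hnp : n ≤ p) (hqp : q ≤ p) {x y : Fin n → Fin q} (hxy : x ≠ y)
    (hs : syndrome m p x = syndrome m p y) : 3 ≤ hammingDist x y := by
  by_contra! hlt
  obtain ⟨i, hi⟩ := Function.ne_iff.mp hxy
  obtain ⟨j, hj⟩ := Finset.exists_subset_pair_of_card_le_two (s := {t | x t ≠ y t})
    (by simpa using hi) (by unfold hammingDist at hlt; omega)
  let d : Fin n → ℤ := fun t => (y t : ℕ) - (x t : ℕ)
  simp only [syndrome, Prod.mk.injEq] at hs
  obtain ⟨hsum, hwsum⟩ := hs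
  rw [ZMod.intCast_eq_intCast_iff_dvd_sub, ← Finset.sum_sub_distrib] at hsum hwsum
  have hd : d = 0 := by
    refine eq_zero_of_dvd_sum_of_support_subset_pair (b := q - 1) (i := i) (j := j)
      (fun t => ?_) (by omega) hp hnp (by omega) (fun t hti htj => ?_) hsum ?_
    · have := (x t).isLt; have := (y t).isLt
      rw [abs_le]; constructor <;> simp only [d] <;> omega
    · have : t ∉ ({t | x t ≠ y t} : Finset _) := fun ht => by simpa [hti, htj] using hj ht
      simp_all [d]
    · simpa [d, mul_sub] using hwsum
  exact hxy (funext fun t => Fin.ext (by have := congrFun hd t; simp [d] at this; omega))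

end Syndrome

lemma exists_code_card_gt_pow_sub_four {q n : ℕ} (hq : 2 ≤ q) (hn : q ^ 2 + q + 1 < n)
    (h : 2 * n * (2 * q - 1) ≤ q ^ 4) :
    ∃ C : Finset (Fin n → Fin q),
      (∀ x ∈ C, ∀ y ∈ C, x ≠ y → 3 ≤ hammingDist x y) ∧ q ^ (n - 4) < #C := by
  obtain ⟨p, hp, hnp, hp2⟩ := Nat.exists_prime_lt_and_le_two_mul (n - 1) (by omega)
  set m := 2 * q - 1
  have : NeZero m := ⟨by omega⟩
  have : NeZero p := ⟨hp.ne_zero⟩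
  have hcard :
      Fintype.card (ZMod m × ZMod p) * (q ^ (n - 4) + 1) ≤ Fintype.card (Fin n → Fin q) := by
    simp only [Fintype.card_prod, ZMod.card, Fintype.card_fun, Fintype.card_fin]
    refine mul_pow_sub_four_add_one_le_pow ?_ (by nlinarith)
    calc m * p ≤ m * (2 * n - 2) := Nat.mul_le_mul_left _ (by omega)
      _ < 2 * n * m := by
        rw [Nat.mul_sub, mul_comm]
        have : 0 < 2 * n * m := Nat.mul_pos (by omega) (by omega)
        omega
      _ ≤ q ^ 4 := h
  obtain ⟨c, hc⟩ := Fintype.exists_le_card_fiber_of_mul_le_card (syndrome m p) hcard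
  refine ⟨({x | syndrome m p x = c} : Finset _), fun x hx y hy hxy => ?_, hc⟩
  refine three_le_hammingDist_of_syndrome_eq (m := m) (p := p) (by omega) hp (by omega)
    (by omega) hxy ?_
  rw [(Finset.mem_filter.mp hx).2, (Finset.mem_filter.mp hy).2]

/-- For a prime power `q` and `q² + q + 1 < n` with `2n(2q − 1) ≤ q⁴`,
`A_q(n,3) > K_q(n,3)`: for every `F_q`-linear code `D` of length `n` with minimum
Hamming distance at least `3` there is a (nonlinear) `q`-ary code `C` of length `n`
with minimum Hamming distance at least `3` and `|C| > |D|`. -/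
theorem stmt_11 (q n : ℕ) (F : Type) [Field F] [Fintype F] [DecidableEq F]
    (hF : Fintype.card F = q)
    (hn : q ^ 2 + q + 1 < n) (h : 2 * n * (2 * q - 1) ≤ q ^ 4)
    (D : Submodule F (Fin n → F))
    (hD : ∀ x ∈ D, ∀ y ∈ D, x ≠ y → 3 ≤ hammingDist x y) :
    ∃ C : Finset (Fin n → Fin q),
      (∀ x ∈ C, ∀ y ∈ C, x ≠ y → 3 ≤ hammingDist x y) ∧
      Nat.card D < C.card := by
  subst hF
  obtain ⟨C, hC, hcard⟩ := exists_code_card_gt_pow_sub_four Fintype.one_lt_card hn h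
  have hrank := D.four_le_finrank_quotient hD (by rwa [Fintype.card_fin])
  have hD_card := D.natCard_le_pow_card_sub hrank
  rw [Fintype.card_fin] at hD_card
  exact ⟨C, hC, hD_card.trans_lt hcard⟩
end

section
/- For every integer n with 92 ≤ n ≤ 383 there exists a code C ⊆ {0, 1, …, 8}^n (alphabet size 9) with minimum Hamming distance at least 3 such that |C| > 9^{n−4}; equivalently r_9(n, 3) ≤ log_9(17 · 383) < 4. -/
/-!
The code is a fibre of the syndrome `x ↦ (∑ xᵢ mod 17, ∑ i·xᵢ mod 383)`; by pigeonhole some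
fibre has at least `9ⁿ / (17·383)` words. The difference `δ` of two words of a fibre has entries
with `|δᵢ| < 9`, so if it has at most two nonzero entries then `|∑ δ| < 17`, and `17 ∣ ∑ δ` forces
a single entry to vanish, or `δⱼ = -δᵢ`. In the latter case `383 ∣ (i - j)·δᵢ`, impossible since
`383` is prime and exceeds `|i - j|` and `|δᵢ|`.
-/

open Finset

theorem Fintype.exists_card_le_card_mul_card_fiber {α β : Type*} [Fintype α] [Fintype β]
    [Nonempty β] [DecidableEq β] (f : α → β) :
    ∃ y : β, Fintype.card α ≤ Fintype.card β * #{x | f x = y} := by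
  have hβ : (Fintype.card β : ℚ) ≠ 0 := by positivity
  obtain ⟨y, hy⟩ := Fintype.exists_le_card_fiber_of_nsmul_le_card f
    (b := (Fintype.card α / Fintype.card β : ℚ)) (by rw [nsmul_eq_mul, mul_div_cancel₀ _ hβ])
  refine ⟨y, ?_⟩
  rw [div_le_iff₀' (by positivity)] at hy
  exact_mod_cast hy

section SyndromeCode

variable {m p q : ℕ}

theorem Int.eq_zero_of_dvd_add_of_dvd_mul_add_mul (hp : p.Prime) (hm : 2 * q ≤ m + 1)
    (hqp : q ≤ p) {i j : ℕ} (hi : i < p) (hj : j < p) (hij : i ≠ j) {a b : ℤ} (ha : a.natAbs < q)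
    (hb : b.natAbs < q) (hsum : (m : ℤ) ∣ a + b) (hwsum : (p : ℤ) ∣ i * a + j * b) :
    a = 0 := by
  have hab : a + b = 0 := Int.eq_zero_of_dvd_of_natAbs_lt_natAbs hsum (by omega)
  have hfactor : (i : ℤ) * a + j * b = (i - j) * a := by linear_combination (j : ℤ) * hab
  rcases Int.Prime.dvd_mul' hp (hfactor ▸ hwsum) with hdiff | ha'
  · have := Int.eq_zero_of_dvd_of_natAbs_lt_natAbs hdiff (by omega)
    omega
  · exact Int.eq_zero_of_dvd_of_natAbs_lt_natAbs ha' (by omega)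

theorem three_le_card_support_of_dvd_sums {n : ℕ} (hp : p.Prime) (hm : 2 * q ≤ m + 1)
    (hqp : q ≤ p) (hn : n ≤ p) (δ : Fin n → ℤ) (hδ : ∀ i, (δ i).natAbs < q) (hne : δ ≠ 0)
    (hsum : (m : ℤ) ∣ ∑ i, δ i) (hwsum : (p : ℤ) ∣ ∑ i : Fin n, ((i : ℕ) : ℤ) * δ i) :
    3 ≤ #{i | δ i ≠ 0} := by
  set D : Finset (Fin n) := {i | δ i ≠ 0} with hD
  have hoff : ∀ i ∉ D, δ i = 0 := by simp [hD]
  have hsumD : ∑ i ∈ D, δ i = ∑ i, δ i :=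
    sum_subset (subset_univ D) fun i _ hi => hoff i hi
  have hwsumD : ∑ i ∈ D, ((i : ℕ) : ℤ) * δ i = ∑ i : Fin n, ((i : ℕ) : ℤ) * δ i :=
    sum_subset (subset_univ D) fun i _ hi => by rw [hoff i hi, mul_zero]
  by_contra! hcard
  interval_cases hc : #D
  · exact hne (funext fun i => hoff i (by simp [card_eq_zero.mp hc]))
  · obtain ⟨i, hi⟩ := card_eq_one.mp hc
    rw [← hsumD, hi, sum_singleton] at hsum
    have hiD : i ∈ D := hi ▸ mem_singleton_self i
    exact (mem_filter.mp hiD).2 (Int.eq_zero_of_dvd_of_natAbs_lt_natAbs hsum (by grind))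
  · obtain ⟨i, j, hij, hDij⟩ := card_eq_two.mp hc
    rw [← hsumD, hDij, sum_pair hij] at hsum
    rw [← hwsumD, hDij, sum_pair hij] at hwsum
    have hiD : i ∈ D := by simp [hDij]
    exact (mem_filter.mp hiD).2 (Int.eq_zero_of_dvd_add_of_dvd_mul_add_mul hp hm hqp
      (by omega) (by omega) (Fin.val_ne_of_ne hij) (hδ i) (hδ j) hsum hwsum)

def checkSyndrome (m p : ℕ) {n : ℕ} (x : Fin n → Fin q) : ZMod m × ZMod p :=
  (∑ i, ((x i : ℕ) : ZMod m), ∑ i : Fin n, ((i : ℕ) : ZMod p) * ((x i : ℕ) : ZMod p))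

theorem three_le_hammingDist_of_checkSyndrome_eq {n : ℕ} (hp : p.Prime) (hm : 2 * q ≤ m + 1)
    (hqp : q ≤ p) (hn : n ≤ p) {x y : Fin n → Fin q}
    (hxy : checkSyndrome m p x = checkSyndrome m p y) (hne : x ≠ y) :
    3 ≤ hammingDist x y := by
  set δ : Fin n → ℤ := fun i => (x i : ℤ) - (y i : ℤ) with hδ
  have hdist : hammingDist x y = #{i | δ i ≠ 0} := by
    simp [hammingDist, hδ, sub_eq_zero, Fin.ext_iff]
  rw [hdist]
  simp only [checkSyndrome, Prod.mk.injEq] at hxy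
  have hbound (i : Fin n) : (δ i).natAbs < q := by
    have := (x i).isLt
    have := (y i).isLt
    simp only [hδ]
    omega
  refine three_le_card_support_of_dvd_sums hp hm hqp hn δ hbound ?_ ?_ ?_
  · contrapose! hne
    exact funext fun i => Fin.ext (by simpa [hδ, sub_eq_zero] using congrFun hne i)
  · rw [← ZMod.intCast_zmod_eq_zero_iff_dvd]
    push_cast [hδ, sum_sub_distrib]
    exact sub_eq_zero.mpr hxy.1
  · rw [← ZMod.intCast_zmod_eq_zero_iff_dvd]
    push_cast [hδ, mul_sub, sum_sub_distrib]
    exact sub_eq_zero.mpr hxy.2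

theorem exists_code_three_le_hammingDist [NeZero m] (hp : p.Prime) (hm : 2 * q ≤ m + 1)
    (hqp : q ≤ p) {n : ℕ} (hn : n ≤ p) :
    ∃ C : Finset (Fin n → Fin q),
      (∀ x ∈ C, ∀ y ∈ C, x ≠ y → 3 ≤ hammingDist x y) ∧ q ^ n ≤ m * p * C.card := by
  have : NeZero p := ⟨hp.ne_zero⟩
  obtain ⟨s, hs⟩ :=
    Fintype.exists_card_le_card_mul_card_fiber (checkSyndrome m p (n := n) (q := q))
  refine ⟨({x | checkSyndrome m p x = s} : Finset _), fun x hx y hy hxy => ?_, ?_⟩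
  · rw [mem_filter] at hx hy
    exact three_le_hammingDist_of_checkSyndrome_eq hp hm hqp hn (hx.2.trans hy.2.symm) hxy
  · simpa [Fintype.card_fun, ZMod.card] using hs

end SyndromeCode

/-- For every `92 ≤ n ≤ 383` there is a `9`-ary code of length `n` with
minimum Hamming distance at least `3` such that `17 · 383 · |C| ≥ 9^n`; in particular
`|C| > 9^{n−4}` (equivalently `r_9(n,3) ≤ log_9(17·383) < 4`). -/
theorem stmt_14 (n : ℕ) (h1 : 92 ≤ n) (h2 : n ≤ 383) :
    ∃ C : Finset (Fin n → Fin 9),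
      (∀ x ∈ C, ∀ y ∈ C, x ≠ y → 3 ≤ hammingDist x y) ∧
      9 ^ n ≤ 17 * 383 * C.card ∧
      9 ^ (n - 4) < C.card := by
  obtain ⟨C, hdist, hcard⟩ :=
    exists_code_three_le_hammingDist (m := 17) (q := 9) (by norm_num) (by norm_num)
      (by norm_num) h2
  refine ⟨C, hdist, hcard, ?_⟩
  have hpow : 9 ^ n = 9 ^ 4 * 9 ^ (n - 4) := by rw [← pow_add]; congr 1; omega
  have hpos : 0 < 9 ^ (n - 4) := by positivity
  omega
end
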